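/- Let r, μ ∈ ℤ⁺ and λ, σ be such that σ^{−1} ∈ ℤ⁺, λ is a positive integer multiple of 5, and λσ is a positive integer multiple of 5. Write w_k = w_{k,λ,σ,r,μ} and η_k = η_{k,λ,σ,r,μ}. Then for every k ∈ Λ: w_k ⊘ w_{−k} + w_{−k} ⊘ w_k = η_k² (I₂ − 2 k ⊗ k), and div( w_k ⊘ w_{−k} + w_{−k} ⊘ w_k ) = ∇(η_k²) − 2μ^{−1} k ∂_t(η_k²) if k ∈ Λ⁺, while div( w_k ⊘ w_{−k} + w_{−k} ⊘ w_k ) = ∇(η_k²) + 2μ^{−1} k ∂_t(η_k²) if k ∈ Λ⁻. -/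

import Mathlib

/-!
For a unit vector `k`, `b_{k,λ}(x) b_{−k,λ}(x)ᵀ = k⊥ ⊗ k⊥ = I₂ − k ⊗ k`, the two phases being
conjugate. Exactly one of `±k` lies in `Λ⁺`, so `η_{−k} = η_k`, and the symmetrised trace-free
product is `η_k² (2 (I₂ − k ⊗ k) − I₂) = η_k² (I₂ − 2 k ⊗ k)`. Its divergence is
`∇(η_k²) − 2 k (k · ∇)(η_k²)`. For `k ∈ Λ⁺`, `η_k` depends on `x` only through `k · x + μt` and
`k⊥ · x`, so shifting `x` by `s k` has the same effect as shifting `t` by `s / μ`: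
`(k · ∇)(η_k²) = μ⁻¹ ∂ₜ(η_k²)`. For `k ∈ Λ⁻` the same holds with `−k`, which flips the sign.
-/

open MeasureTheory Real Filter Matrix
open scoped ENNReal NNReal

noncomputable section

/-- Points of the torus `𝕋² = ℝ²/(2πℤ)²` are represented by points of `ℝ²`;
functions on `𝕋²` are `2π`-periodic functions on `ℝ²`. -/
abbrev Vec2 := Fin 2 → ℝ

/-- The `j`-th standard basis vector of `ℝ²`. -/
def e2 (j : Fin 2) : Vec2 := Pi.single j 1

/-- A fundamental domain for `𝕋²`. -/
def Q2 : Set Vec2 := Set.univ.pi fun _ => Set.Ioc (0:ℝ) (2*π)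

/-- Lebesgue measure on `𝕋²`, realized on the fundamental domain. -/
def μT : Measure Vec2 := volume.restrict Q2

/-- `2π`-periodicity in each coordinate: a function on `𝕋²`. -/
def Per {α : Type*} (f : Vec2 → α) : Prop :=
  ∀ (x : Vec2) (j : Fin 2), f (x + (2*π) • e2 j) = f x

/-- Divergence of a vector field. -/
def divg (f : Vec2 → Vec2) (x : Vec2) : ℝ := ∑ j, fderiv ℝ (fun y => f y j) x (e2 j)

/-- The set `Λ⁺` of direction vectors. -/
def Λp : Finset Vec2 :=
  { ![3/5, 4/5], ![3/5, -4/5], ![4/5, 3/5], ![4/5, -3/5] }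

/-- The set `Λ⁻ = −Λ⁺`. -/
def Λm : Finset Vec2 := Λp.image (fun k => -k)

/-- The set of directions `Λ = Λ⁺ ∪ Λ⁻`. -/
def Λdir : Finset Vec2 := Λp ∪ Λm

/-- `k⊥ = (−k₂, k₁)`. -/
def perp (k : Vec2) : Vec2 := ![-(k 1), k 0]

/-- Trace-free part of the tensor product of two real vectors:
`f ⊘ g = f ⊗ g − ½(f·g) I₂`. -/
def ot (f g : Vec2) : Fin 2 → Fin 2 → ℝ :=
  fun i j => f i * g j - (if i = j then (f ⬝ᵥ g) / 2 else 0)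

/-- Trace-free part of the tensor product of two complex vectors. -/
def otC (f g : Fin 2 → ℂ) : Fin 2 → Fin 2 → ℂ :=
  fun i j => f i * g j - (if i = j then (f ⬝ᵥ g) / 2 else 0)

/-- The 2D stationary flow `b_{k,λ}(x) = i k⊥ e^{iλ k·x}`. -/
def bflow (k : Vec2) (l : ℝ) (x : Vec2) : Fin 2 → ℂ :=
  fun i => Complex.I * ((perp k i : ℝ) : ℂ) * Complex.exp (Complex.I * ((l * (k ⬝ᵥ x) : ℝ) : ℂ))

/-- Its potential `ψ_{k,λ}(x) = λ⁻¹ e^{iλ k·x}`. -/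
def ψflow (k : Vec2) (l : ℝ) (x : Vec2) : ℂ :=
  ((l : ℂ))⁻¹ * Complex.exp (Complex.I * ((l * (k ⬝ᵥ x) : ℝ) : ℂ))

/-- Partial derivative `∂_j` of a complex-valued function on `ℝ²`. -/
def pdC (j : Fin 2) (f : Vec2 → ℂ) : Vec2 → ℂ := fun x => fderiv ℝ f x (e2 j)

/-- The index set `Ω_r = {k ∈ ℤ² : |k₁| ≤ r, |k₂| ≤ r}`. -/
def Ωr (r : ℕ) : Finset (ℤ × ℤ) := Finset.Icc (-(r:ℤ)) r ×ˢ Finset.Icc (-(r:ℤ)) r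

/-- The 2D Dirichlet kernel `D_r(x) = (2r+1)⁻¹ Σ_{k∈Ω_r} e^{ik·x}` on `𝕋²`. -/
def Dker (r : ℕ) (x : Vec2) : ℂ :=
  (((2*(r:ℝ)+1) : ℝ) : ℂ)⁻¹ *
    ∑ k ∈ Ωr r, Complex.exp (Complex.I * (((k.1 : ℝ) * x 0 + (k.2 : ℝ) * x 1 : ℝ) : ℂ))

/-- The 2D Dirichlet kernel as a real-valued function of two real arguments. -/
def DkerR (r : ℕ) (a b : ℝ) : ℝ :=
  ((((2*(r:ℝ)+1) : ℝ) : ℂ)⁻¹ *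
    ∑ k ∈ Ωr r, Complex.exp (Complex.I * (((k.1 : ℝ) * a + (k.2 : ℝ) * b : ℝ) : ℂ))).re

/-- The directed–rescaled Dirichlet kernel with temporal shift:
`η_{k,λ,σ,r,μ}(t,x) = D_r(λσ(k·x + μt), λσ k⊥·x)` for `k ∈ Λ⁺`, and
`η_{k,λ,σ,r,μ} = η_{−k,λ,σ,r,μ}` for `k ∈ Λ⁻`. -/
def ηfun (k : Vec2) (l σ : ℝ) (r : ℕ) (μ : ℝ) (t : ℝ) (x : Vec2) : ℝ :=
  if k ∈ Λp then
    DkerR r (l * σ * (k ⬝ᵥ x + μ * t)) (l * σ * (perp k ⬝ᵥ x))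
  else
    DkerR r (l * σ * ((-k) ⬝ᵥ x + μ * t)) (l * σ * (perp (-k) ⬝ᵥ x))

/-- The intermittent 2D stationary flow `w_{k,λ,σ,r,μ}(t,x) = η_{k,λ,σ,r,μ}(t,x) b_{k,λ}(x)`. -/
def wflow (k : Vec2) (l σ : ℝ) (r : ℕ) (μ : ℝ) (t : ℝ) (x : Vec2) : Fin 2 → ℂ :=
  fun i => ((ηfun k l σ r μ t x : ℝ) : ℂ) * bflow k l x i
lemma perp_neg (k : Vec2) : perp (-k) = -perp k := by
  ext j; fin_cases j <;> simp [perp]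

lemma perp_dotProduct_self (k : Vec2) : perp k ⬝ᵥ k = 0 := by
  simp only [dotProduct, perp, Fin.sum_univ_two, cons_val_zero, cons_val_one, cons_val_fin_one]
  ring

lemma perp_mul_perp {k : Vec2} (hk : k ⬝ᵥ k = 1) (i j : Fin 2) :
    perp k i * perp k j = (if i = j then 1 else 0) - k i * k j := by
  simp only [dotProduct, Fin.sum_univ_two] at hk
  fin_cases i <;> fin_cases j <;>
    simp only [perp, Fin.zero_eta, Fin.mk_one, Fin.isValue, cons_val_zero, cons_val_one,
      cons_val_fin_one, ↓reduceIte, zero_ne_one, one_ne_zero] <;>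
    linarith

lemma mul_fderiv_apply_self_eq_deriv {F : ℝ × ℝ → ℝ} (hF : Differentiable ℝ F) {m : Vec2}
    (hm : m ⬝ᵥ m = 1) (c μ t : ℝ) (x : Vec2) :
    μ * fderiv ℝ (fun y => F (c * (m ⬝ᵥ y + μ * t), c * (perp m ⬝ᵥ y))) x m
      = deriv (fun s => F (c * (m ⬝ᵥ x + μ * s), c * (perp m ⬝ᵥ x))) t := by
  set h : ℝ → ℝ := fun u => F (c * u, c * (perp m ⬝ᵥ x))
  have hdiff : DifferentiableAt ℝ (fun y => F (c * (m ⬝ᵥ y + μ * t), c * (perp m ⬝ᵥ y))) x := by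
    simp only [dotProduct, Fin.sum_univ_two]
    fun_prop
  have hline : (fun s : ℝ => F (c * (m ⬝ᵥ (x + s • m) + μ * t), c * (perp m ⬝ᵥ (x + s • m))))
      = fun s => h (m ⬝ᵥ x + μ * t + s) := by
    funext s
    simp only [h, dotProduct_add, dotProduct_smul, hm, perp_dotProduct_self, smul_eq_mul]
    ring_nf
  have htime := deriv_comp_mul_left μ (fun u => h (m ⬝ᵥ x + u)) t
  simp only [deriv_comp_const_add, smul_eq_mul] at htime
  rw [← hdiff.lineDeriv_eq_fderiv, lineDeriv, hline, deriv_comp_const_add, add_zero]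
  exact htime.symm

lemma sum_fderiv_ofReal_mul_reflection {φ : Vec2 → ℝ} {x : Vec2} (hφ : DifferentiableAt ℝ φ x)
    (k : Vec2) (i : Fin 2) :
    ∑ j, fderiv ℝ (fun y => ((φ y * ((if i = j then 1 else 0) - 2 * k i * k j) : ℝ) : ℂ)) x (e2 j)
      = ((fderiv ℝ φ x (e2 i) - 2 * k i * fderiv ℝ φ x k : ℝ) : ℂ) := by
  have hterm : ∀ c : ℝ, ∀ v : Vec2,
      fderiv ℝ (fun y => ((φ y * c : ℝ) : ℂ)) x v = ((c * fderiv ℝ φ x v : ℝ) : ℂ) := by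
    intro c v
    have h : HasFDerivAt (fun y => ((φ y * c : ℝ) : ℂ))
        (Complex.ofRealCLM.comp (c • fderiv ℝ φ x)) x :=
      Complex.ofRealCLM.hasFDerivAt.comp x (hφ.hasFDerivAt.mul_const c)
    rw [h.fderiv]
    simp
  have hk : fderiv ℝ φ x k = k 0 * fderiv ℝ φ x (e2 0) + k 1 * fderiv ℝ φ x (e2 1) := by
    have : k = k 0 • e2 0 + k 1 • e2 1 := by
      ext j; fin_cases j <;> simp [e2]
    conv_lhs => rw [this]
    simp
  simp only [hterm, Fin.sum_univ_two, hk]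
  fin_cases i <;>
    simp only [Fin.zero_eta, Fin.mk_one, Fin.isValue, ↓reduceIte, zero_ne_one, one_ne_zero] <;>
    push_cast <;> ring

lemma differentiable_DkerR (r : ℕ) : Differentiable ℝ (fun p : ℝ × ℝ => DkerR r p.1 p.2) := by
  unfold DkerR; fun_prop

lemma dotProduct_self_eq_one_of_mem_Λdir {k : Vec2} (hk : k ∈ Λdir) : k ⬝ᵥ k = 1 := by
  simp only [Λdir, Λm, Λp, Finset.mem_union, Finset.mem_image, Finset.mem_insert,
    Finset.mem_singleton] at hk
  rcases hk with (rfl|rfl|rfl|rfl) | ⟨a, (rfl|rfl|rfl|rfl), rfl⟩ <;>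
    norm_num [dotProduct, Fin.sum_univ_two]

lemma neg_mem_Λp_iff {k : Vec2} (hk : k ∈ Λdir) : -k ∈ Λp ↔ k ∉ Λp := by
  simp only [Λdir, Λm, Λp, Finset.mem_union, Finset.mem_image, Finset.mem_insert,
    Finset.mem_singleton] at hk
  rcases hk with (rfl|rfl|rfl|rfl) | ⟨a, (rfl|rfl|rfl|rfl), rfl⟩ <;>
    norm_num [Λp, funext_iff, Fin.forall_fin_two]

section Flows

variable (l σ : ℝ) (r : ℕ) (μ : ℝ)

lemma ηfun_neg {k : Vec2} (hk : k ∈ Λdir) : ηfun (-k) l σ r μ = ηfun k l σ r μ := by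
  ext t x
  by_cases hkp : k ∈ Λp
  · have hnkp : -k ∉ Λp := fun h => (neg_mem_Λp_iff hk).1 h hkp
    simp [ηfun, hkp, hnkp]
  · simp [ηfun, hkp, (neg_mem_Λp_iff hk).2 hkp]

lemma ηfun_of_mem_Λp {k : Vec2} (hk : k ∈ Λp) (t : ℝ) (x : Vec2) :
    ηfun k l σ r μ t x = DkerR r (l * σ * (k ⬝ᵥ x + μ * t)) (l * σ * (perp k ⬝ᵥ x)) := by
  simp [ηfun, hk]

lemma differentiable_ηfun (k : Vec2) (t : ℝ) : Differentiable ℝ (ηfun k l σ r μ t) := by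
  have hD := differentiable_DkerR r
  unfold ηfun
  simp only [dotProduct, Fin.sum_univ_two]
  split_ifs <;> fun_prop

lemma bflow_mul_bflow_neg (k : Vec2) (x : Vec2) (i j : Fin 2) :
    bflow k l x i * bflow (-k) l x j = perp k i * perp k j := by
  have hexp : Complex.exp (Complex.I * ((l * ((-k) ⬝ᵥ x) : ℝ) : ℂ))
      = (Complex.exp (Complex.I * ((l * (k ⬝ᵥ x) : ℝ) : ℂ)))⁻¹ := by
    rw [← Complex.exp_neg, neg_dotProduct]
    push_cast
    ring_nf
  simp only [bflow, hexp, perp_neg, Pi.neg_apply]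
  field_simp
  push_cast
  linear_combination (-(perp k i : ℂ) * perp k j) * Complex.I_mul_I

lemma wflow_mul_wflow_neg {k : Vec2} (hk : k ∈ Λdir) (t : ℝ) (x : Vec2) (i j : Fin 2) :
    wflow k l σ r μ t x i * wflow (-k) l σ r μ t x j
      = ((ηfun k l σ r μ t x ^ 2 * ((if i = j then 1 else 0) - k i * k j) : ℝ) : ℂ) := by
  rw [wflow, wflow, ηfun_neg l σ r μ hk, mul_mul_mul_comm, bflow_mul_bflow_neg,
    ← perp_mul_perp (dotProduct_self_eq_one_of_mem_Λdir hk)]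
  push_cast
  ring

lemma otC_wflow_add_otC_wflow_neg {k : Vec2} (hk : k ∈ Λdir) (t : ℝ) (x : Vec2) (i j : Fin 2) :
    otC (wflow k l σ r μ t x) (wflow (-k) l σ r μ t x) i j
        + otC (wflow (-k) l σ r μ t x) (wflow k l σ r μ t x) i j
      = ((ηfun k l σ r μ t x ^ 2 * ((if i = j then 1 else 0) - 2 * k i * k j) : ℝ) : ℂ) := by
  have hw := wflow_mul_wflow_neg l σ r μ hk t x
  have hk1 : (k 0 : ℂ) * k 0 + k 1 * k 1 = 1 := by
    have := dotProduct_self_eq_one_of_mem_Λdir hk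
    simp only [dotProduct, Fin.sum_univ_two] at this
    exact_mod_cast this
  simp only [otC, dotProduct, Fin.sum_univ_two, mul_comm (wflow (-k) l σ r μ t x _), hw]
  by_cases hij : i = j
  · subst hij
    simp only [↓reduceIte]
    push_cast
    linear_combination (ηfun k l σ r μ t x : ℂ) ^ 2 * hk1
  · simp only [hij, Ne.symm hij, if_false]
    push_cast
    ring

lemma sum_fderiv_otC_wflow {k : Vec2} (hk : k ∈ Λdir) (t : ℝ) (x : Vec2) (i : Fin 2) :
    ∑ j, fderiv ℝ (fun y => otC (wflow k l σ r μ t y) (wflow (-k) l σ r μ t y) i j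
        + otC (wflow (-k) l σ r μ t y) (wflow k l σ r μ t y) i j) x (e2 j)
      = ((fderiv ℝ (fun y => ηfun k l σ r μ t y ^ 2) x (e2 i)
          - 2 * k i * fderiv ℝ (fun y => ηfun k l σ r μ t y ^ 2) x k : ℝ) : ℂ) := by
  simp only [otC_wflow_add_otC_wflow_neg l σ r μ hk t]
  exact sum_fderiv_ofReal_mul_reflection ((differentiable_ηfun l σ r μ k t).pow 2 x) k i

lemma fderiv_ηfun_sq_apply_self {k : Vec2} (hk : k ∈ Λp) (hμ : μ ≠ 0) (t : ℝ) (x : Vec2) :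
    fderiv ℝ (fun y => ηfun k l σ r μ t y ^ 2) x k
      = μ⁻¹ * deriv (fun s => ηfun k l σ r μ s x ^ 2) t := by
  simp only [ηfun_of_mem_Λp l σ r μ hk]
  rw [← mul_fderiv_apply_self_eq_deriv (F := fun p => DkerR r p.1 p.2 ^ 2)
    ((differentiable_DkerR r).pow 2)
    (dotProduct_self_eq_one_of_mem_Λdir (Finset.mem_union_left _ hk)), inv_mul_cancel_left₀ hμ]

end Flows

theorem statement19_general (r μ : ℕ) (hμ : 0 < μ) (l σ : ℝ) :
    (∀ k ∈ Λdir, ∀ (t : ℝ) (x : Vec2) (i j : Fin 2),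
      otC (wflow k l σ r (μ:ℝ) t x) (wflow (-k) l σ r (μ:ℝ) t x) i j
        + otC (wflow (-k) l σ r (μ:ℝ) t x) (wflow k l σ r (μ:ℝ) t x) i j
      = (((ηfun k l σ r (μ:ℝ) t x)^2
          * ((if i = j then 1 else 0) - 2 * k i * k j) : ℝ) : ℂ)) ∧
    (∀ k ∈ Λp, ∀ (t : ℝ) (x : Vec2) (i : Fin 2),
      (∑ j, fderiv ℝ
          (fun y => otC (wflow k l σ r (μ:ℝ) t y) (wflow (-k) l σ r (μ:ℝ) t y) i j
            + otC (wflow (-k) l σ r (μ:ℝ) t y) (wflow k l σ r (μ:ℝ) t y) i j) x (e2 j))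
        = ((fderiv ℝ (fun y => (ηfun k l σ r (μ:ℝ) t y)^2) x (e2 i)
            - 2 * ((μ:ℝ))⁻¹ * k i * deriv (fun s => (ηfun k l σ r (μ:ℝ) s x)^2) t
            : ℝ) : ℂ)) ∧
    (∀ k ∈ Λm, ∀ (t : ℝ) (x : Vec2) (i : Fin 2),
      (∑ j, fderiv ℝ
          (fun y => otC (wflow k l σ r (μ:ℝ) t y) (wflow (-k) l σ r (μ:ℝ) t y) i j
            + otC (wflow (-k) l σ r (μ:ℝ) t y) (wflow k l σ r (μ:ℝ) t y) i j) x (e2 j))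
        = ((fderiv ℝ (fun y => (ηfun k l σ r (μ:ℝ) t y)^2) x (e2 i)
            + 2 * ((μ:ℝ))⁻¹ * k i * deriv (fun s => (ηfun k l σ r (μ:ℝ) s x)^2) t
            : ℝ) : ℂ)) := by
  have hμ' : (μ : ℝ) ≠ 0 := by positivity
  refine ⟨fun k hk => otC_wflow_add_otC_wflow_neg l σ r μ hk, fun k hk t x i => ?_,
    fun k hk t x i => ?_⟩
  · rw [sum_fderiv_otC_wflow l σ r μ (Finset.mem_union_left _ hk),
      fderiv_ηfun_sq_apply_self l σ r μ hk hμ']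
    congr 1
    ring
  · obtain ⟨a, ha, rfl⟩ := Finset.mem_image.mp hk
    rw [sum_fderiv_otC_wflow l σ r μ (Finset.mem_union_right _ hk),
      ηfun_neg l σ r μ (Finset.mem_union_left _ ha), map_neg,
      fderiv_ηfun_sq_apply_self l σ r μ ha hμ']
    congr 1
    simp only [Pi.neg_apply]
    ring

/-- The antipodal interaction:
`w_k ⊘ w_{−k} + w_{−k} ⊘ w_k = η_k² (I₂ − 2 k ⊗ k)`, and
`div(w_k ⊘ w_{−k} + w_{−k} ⊘ w_k) = ∇(η_k²) ∓ 2μ⁻¹ k ∂ₜ(η_k²)` for `k ∈ Λ^±`. -/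
theorem statement19 (r μ : ℕ) (hr : 0 < r) (hμ : 0 < μ) (l σ : ℝ)
    (hσ : ∃ n : ℕ, 0 < n ∧ σ⁻¹ = (n : ℝ))
    (hl : ∃ n : ℕ, 0 < n ∧ l = 5 * n)
    (hlσ : ∃ n : ℕ, 0 < n ∧ l * σ = 5 * n) :
    (∀ k ∈ Λdir, ∀ (t : ℝ) (x : Vec2) (i j : Fin 2),
      otC (wflow k l σ r (μ:ℝ) t x) (wflow (-k) l σ r (μ:ℝ) t x) i j
        + otC (wflow (-k) l σ r (μ:ℝ) t x) (wflow k l σ r (μ:ℝ) t x) i j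
      = (((ηfun k l σ r (μ:ℝ) t x)^2
          * ((if i = j then 1 else 0) - 2 * k i * k j) : ℝ) : ℂ)) ∧
    (∀ k ∈ Λp, ∀ (t : ℝ) (x : Vec2) (i : Fin 2),
      (∑ j, fderiv ℝ
          (fun y => otC (wflow k l σ r (μ:ℝ) t y) (wflow (-k) l σ r (μ:ℝ) t y) i j
            + otC (wflow (-k) l σ r (μ:ℝ) t y) (wflow k l σ r (μ:ℝ) t y) i j) x (e2 j))
        = ((fderiv ℝ (fun y => (ηfun k l σ r (μ:ℝ) t y)^2) x (e2 i)
            - 2 * ((μ:ℝ))⁻¹ * k i * deriv (fun s => (ηfun k l σ r (μ:ℝ) s x)^2) t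
            : ℝ) : ℂ)) ∧
    (∀ k ∈ Λm, ∀ (t : ℝ) (x : Vec2) (i : Fin 2),
      (∑ j, fderiv ℝ
          (fun y => otC (wflow k l σ r (μ:ℝ) t y) (wflow (-k) l σ r (μ:ℝ) t y) i j
            + otC (wflow (-k) l σ r (μ:ℝ) t y) (wflow k l σ r (μ:ℝ) t y) i j) x (e2 j))
        = ((fderiv ℝ (fun y => (ηfun k l σ r (μ:ℝ) t y)^2) x (e2 i)
            + 2 * ((μ:ℝ))⁻¹ * k i * deriv (fun s => (ηfun k l σ r (μ:ℝ) s x)^2) t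
            : ℝ) : ℂ)) :=
  statement19_general r μ hμ l σ
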